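/- Let F be a field with char F ≠ 2 and let I be an infinite set. Then for every derivation d of the Lie algebra sl_∞(I,F) there exists a matrix y ∈ M_rcf(I,F) such that d(a) = ya − ay for all a ∈ sl_∞(I,F). -/

import Mathlib

/-!
With `E i j = single i j 1`, the relation `E i j = [E i k, E k j]` for `k ∉ {i, j}` shows that
the `(p, r)` entry of `d (E q r)` does not depend on `r ∉ {p, q}`, and that the diagonal entries
`d (E i j) i j` form an additive cocycle, hence are differences `y i i - y j j`. Together these
entries form a matrix `y` with `d (E i j) = [y, E i j]` for all `i ≠ j`; it is row-and-column
finite because, up to one entry, its rows and columns are rows and columns of the finitary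
matrices `d (E k p)`. Finally `sl_∞` is spanned by the `E i j` with `i ≠ j` and the brackets
`E i i - E j j = [E i j, E j i]`, and `ad y` is a derivation of the rcf matrices, so `d = ad y`.
-/

/-- The product of two `I × I` matrices, defined via `finsum`; it is well defined
whenever one factor is finitary or both are row-and-column-finite. -/
noncomputable def matMul {F I : Type*} [Field F] (a b : Matrix I I F) : Matrix I I F :=
  fun i j => ∑ᶠ k, a i k * b k j

/-- A finitary matrix: only finitely many nonzero entries. -/
def IsFinitary {F I : Type*} [Field F] (a : Matrix I I F) : Prop :=
  {p : I × I | a p.1 p.2 ≠ 0}.Finite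

/-- A matrix has finitely many nonzero entries in each row and in each column. -/
def IsRcf {F I : Type*} [Field F] (a : Matrix I I F) : Prop :=
  (∀ i, {j | a i j ≠ 0}.Finite) ∧ (∀ j, {i | a i j ≠ 0}.Finite)

/-- Membership in `sl_∞(I,F)`: a finitary matrix of trace zero (the trace being the
finite sum of diagonal entries). -/
def IsSl {F I : Type*} [Field F] (a : Matrix I I F) : Prop :=
  IsFinitary a ∧ (∑ᶠ i, a i i) = 0

open Matrix

section MatrixAlgebra

variable {F I : Type*} [Field F]

theorem IsFinitary.isRcf {a : Matrix I I F} (ha : IsFinitary a) : IsRcf a :=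
  ⟨fun i => (ha.image Prod.snd).subset fun j hj => ⟨(i, j), hj, rfl⟩,
    fun j => (ha.image Prod.fst).subset fun i hi => ⟨(i, j), hi, rfl⟩⟩

theorem IsFinitary.add {a b : Matrix I I F} (ha : IsFinitary a) (hb : IsFinitary b) :
    IsFinitary (a + b) :=
  (ha.union hb).subset fun x hx => by
    by_contra h
    simp_all [not_or]

theorem IsFinitary.sub {a b : Matrix I I F} (ha : IsFinitary a) (hb : IsFinitary b) :
    IsFinitary (a - b) :=
  (ha.union hb).subset fun x hx => by
    by_contra h
    simp_all [not_or]

theorem IsFinitary.smul {a : Matrix I I F} (ha : IsFinitary a) (c : F) : IsFinitary (c • a) :=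
  ha.subset fun x hx h => hx (by simp [h])

theorem IsFinitary.hasFiniteSupport_diag {a : Matrix I I F} (ha : IsFinitary a) :
    Function.HasFiniteSupport fun i => a i i :=
  (ha.preimage (f := fun i => (i, i)) fun _ _ _ _ h => congrArg Prod.fst h).subset fun _ h => h

theorem isSl_zero : IsSl (0 : Matrix I I F) :=
  ⟨by simp [IsFinitary], by simp⟩

theorem IsSl.add {a b : Matrix I I F} (ha : IsSl a) (hb : IsSl b) : IsSl (a + b) := by
  refine ⟨ha.1.add hb.1, ?_⟩
  simp only [Matrix.add_apply]
  rw [finsum_add_distrib ha.1.hasFiniteSupport_diag hb.1.hasFiniteSupport_diag, ha.2, hb.2,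
    add_zero]

theorem IsSl.smul {a : Matrix I I F} (ha : IsSl a) (c : F) : IsSl (c • a) := by
  refine ⟨ha.1.smul c, ?_⟩
  simp only [Matrix.smul_apply, smul_eq_mul]
  rw [← mul_finsum, ha.2, mul_zero]

theorem IsSl.eq_zero_of_support_subset {a : Matrix I I F} (ha : IsSl a) {i₀ : I}
    (hsupp : ∀ p q, a p q ≠ 0 → p = i₀ ∧ q = i₀) : a = 0 := by
  have hdiag : a i₀ i₀ = 0 := by
    rw [← ha.2, finsum_eq_single _ i₀ fun i hi => by_contra fun h => hi (hsupp i i h).1]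
  ext p q
  by_contra h
  obtain ⟨rfl, rfl⟩ := hsupp p q h
  exact h hdiag

theorem matMul_apply_eq_sum_of_row_subset {x : Matrix I I F} {p : I} {s : Finset I}
    (hs : {l | x p l ≠ 0} ⊆ s) (y : Matrix I I F) (q : I) :
    matMul x y p q = ∑ l ∈ s, x p l * y l q :=
  finsum_eq_sum_of_support_subset _ fun _ hl => hs (left_ne_zero_of_mul hl)

theorem matMul_apply_eq_sum_of_col_subset {y : Matrix I I F} {q : I} {s : Finset I}
    (hs : {l | y l q ≠ 0} ⊆ s) (x : Matrix I I F) (p : I) :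
    matMul x y p q = ∑ l ∈ s, x p l * y l q :=
  finsum_eq_sum_of_support_subset _ fun _ hl => hs (right_ne_zero_of_mul hl)

theorem matMul_zero (x : Matrix I I F) : matMul x 0 = 0 := by
  ext p q
  simp [matMul]

theorem zero_matMul (x : Matrix I I F) : matMul 0 x = 0 := by
  ext p q
  simp [matMul]

theorem matMul_smul (x a : Matrix I I F) (c : F) : matMul x (c • a) = c • matMul x a := by
  ext p q
  simp only [matMul, Matrix.smul_apply, smul_eq_mul, mul_finsum, mul_left_comm]

theorem smul_matMul (a x : Matrix I I F) (c : F) : matMul (c • a) x = c • matMul a x := by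
  ext p q
  simp only [matMul, Matrix.smul_apply, smul_eq_mul, mul_finsum, mul_assoc]

theorem matMul_add {x : Matrix I I F} (hx : IsRcf x) (a b : Matrix I I F) :
    matMul x (a + b) = matMul x a + matMul x b := by
  ext p q
  simp only [Matrix.add_apply,
    matMul_apply_eq_sum_of_row_subset (hx.1 p).coe_toFinset.superset, mul_add,
    Finset.sum_add_distrib]

theorem matMul_sub {x : Matrix I I F} (hx : IsRcf x) (a b : Matrix I I F) :
    matMul x (a - b) = matMul x a - matMul x b := by
  ext p q
  simp only [Matrix.sub_apply,
    matMul_apply_eq_sum_of_row_subset (hx.1 p).coe_toFinset.superset, mul_sub,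
    Finset.sum_sub_distrib]

theorem add_matMul {x : Matrix I I F} (hx : IsRcf x) (a b : Matrix I I F) :
    matMul (a + b) x = matMul a x + matMul b x := by
  ext p q
  simp only [Matrix.add_apply,
    matMul_apply_eq_sum_of_col_subset (hx.2 q).coe_toFinset.superset, add_mul,
    Finset.sum_add_distrib]

theorem sub_matMul {x : Matrix I I F} (hx : IsRcf x) (a b : Matrix I I F) :
    matMul (a - b) x = matMul a x - matMul b x := by
  ext p q
  simp only [Matrix.sub_apply,
    matMul_apply_eq_sum_of_col_subset (hx.2 q).coe_toFinset.superset, sub_mul,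
    Finset.sum_sub_distrib]

theorem matMul_assoc {x z : Matrix I I F} (hx : IsRcf x) (hz : IsRcf z) (y : Matrix I I F) :
    matMul (matMul x y) z = matMul x (matMul y z) := by
  ext p q
  simp only [matMul_apply_eq_sum_of_col_subset (hz.2 q).coe_toFinset.superset,
    matMul_apply_eq_sum_of_row_subset (hx.1 p).coe_toFinset.superset, Finset.sum_mul,
    Finset.mul_sum, mul_assoc]
  exact Finset.sum_comm

theorem matMul_commutator_sub {y a b : Matrix I I F} (hy : IsRcf y) (ha : IsRcf a)
    (hb : IsRcf b) :
    matMul y (matMul a b - matMul b a) - matMul (matMul a b - matMul b a) y =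
      (matMul (matMul y a - matMul a y) b - matMul b (matMul y a - matMul a y)) +
        (matMul a (matMul y b - matMul b y) - matMul (matMul y b - matMul b y) a) := by
  rw [matMul_sub hy, sub_matMul hy, sub_matMul hb, matMul_sub hb, matMul_sub ha, sub_matMul ha,
    matMul_assoc hy hb, matMul_assoc ha hb, matMul_assoc ha hy, matMul_assoc hb hy,
    matMul_assoc hb ha, matMul_assoc hy ha]
  abel

end MatrixAlgebra

section Single

variable {F I : Type*} [Field F] [DecidableEq I]

theorem matMul_single_apply (a : Matrix I I F) (i j p q : I) :
    matMul a (single i j 1) p q = if q = j then a p i else 0 := by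
  rw [matMul, finsum_eq_single _ i fun k hk => by simp [Ne.symm hk]]
  split_ifs with hq
  · simp [hq]
  · simp [single_apply_of_col_ne _ _ (Ne.symm hq)]

theorem single_matMul_apply (a : Matrix I I F) (i j p q : I) :
    matMul (single i j 1) a p q = if p = i then a j q else 0 := by
  rw [matMul, finsum_eq_single _ j fun k hk => by simp [Ne.symm hk]]
  split_ifs with hp
  · simp [hp]
  · simp [single_apply_of_row_ne (Ne.symm hp)]

theorem single_matMul_single_same (i k j : I) :
    matMul (single i k 1) (single k j (1 : F)) = single i j 1 := by
  ext p q
  simp only [matMul_single_apply, single_apply, and_true]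
  split_ifs <;> simp_all

theorem single_matMul_single_of_ne {k k' : I} (i j : I) (h : k ≠ k') :
    matMul (single i k 1) (single k' j (1 : F)) = 0 := by
  ext p q
  simp [matMul_single_apply, h]

theorem isFinitary_single (i j : I) : IsFinitary (single i j (1 : F)) :=
  (Set.finite_singleton (i, j)).subset fun x hx => by
    by_contra h
    exact hx (single_apply_of_ne _ _ _ _ _ fun hij => h (Prod.ext hij.1.symm hij.2.symm))

theorem isSl_single {i j : I} (hij : i ≠ j) : IsSl (single i j (1 : F)) :=
  ⟨isFinitary_single i j,
    (finsum_congr fun _ => single_apply_of_ne _ _ _ _ _ fun h => hij (h.1.trans h.2.symm)).trans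
      finsum_zero⟩

theorem isSl_single_sub_single (i j : I) : IsSl (single i i 1 - single j j (1 : F)) := by
  refine ⟨?_, ?_⟩
  · exact (isFinitary_single i i).sub (isFinitary_single j j)
  · simp only [Matrix.sub_apply]
    rw [finsum_sub_distrib (isFinitary_single i i).hasFiniteSupport_diag
      (isFinitary_single j j).hasFiniteSupport_diag,
      finsum_eq_single _ i fun k hk => single_apply_of_row_ne (Ne.symm hk) _ _ _,
      finsum_eq_single _ j fun k hk => single_apply_of_row_ne (Ne.symm hk) _ _ _,
      single_apply_same, single_apply_same, sub_self]

end Single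

section Span

variable {F I : Type*} [Field F] [DecidableEq I]

theorem IsSl.induction_on {P : Matrix I I F → Prop} (zero : P 0)
    (add : ∀ a b, IsSl a → IsSl b → P a → P b → P (a + b))
    (smul : ∀ (c : F) a, IsSl a → P a → P (c • a))
    (single_of_ne : ∀ i j, i ≠ j → P (single i j 1))
    (single_sub_single : ∀ i j, i ≠ j → P (single i i 1 - single j j 1))
    {a : Matrix I I F} (ha : IsSl a) : P a := by
  rcases isEmpty_or_nonempty I with hI | ⟨⟨i₀⟩⟩
  · rwa [Subsingleton.elim a 0]
  let B (x : I × I) : Matrix I I F :=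
    single x.1 x.2 1 - if x.1 = x.2 then single i₀ i₀ 1 else 0
  have hB : ∀ x, IsSl (B x) ∧ P (B x) := by
    rintro ⟨i, j⟩
    by_cases hij : i = j
    · subst hij
      by_cases hi : i = i₀
      · subst hi
        simpa [B] using And.intro isSl_zero zero
      · simpa [B] using And.intro (isSl_single_sub_single i i₀) (single_sub_single i i₀ hi)
    · simpa [B, hij] using And.intro (isSl_single hij) (single_of_ne i j hij)
  have hB_apply :
      ∀ x y : I × I, y ≠ (i₀, i₀) → B x y.1 y.2 = if x = y then 1 else 0 := by
    rintro ⟨i, j⟩ ⟨p, q⟩ hy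
    have : ¬(i₀ = p ∧ i₀ = q) := fun h => hy (by rw [← h.1, ← h.2])
    by_cases hij : i = j <;> simp [B, single_apply, hij, Prod.ext_iff, this]
  -- Subtracting `a x • B x` clears the entry at `x` and changes no other entry but `(i₀, i₀)`.
  suffices key : ∀ (T : Finset (I × I)) (a : Matrix I I F), IsSl a →
      (∀ y : I × I, a y.1 y.2 ≠ 0 → y = (i₀, i₀) ∨ y ∈ T) → P a from
    key ha.1.toFinset a ha fun y hy => Or.inr (ha.1.mem_toFinset.2 hy)
  intro T
  induction T using Finset.induction_on with
  | empty =>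
    intro a ha hsupp
    rw [ha.eq_zero_of_support_subset fun p q h => by simpa using hsupp (p, q) h]
    exact zero
  | insert x T hx ih =>
    intro a ha hsupp
    set c := a x.1 x.2
    have hrest : IsSl (a + (-c) • B x) := ha.add ((hB x).1.smul _)
    have hPrest : P (a + (-c) • B x) := ih _ hrest fun y hy => by
      by_contra hyT
      rw [not_or] at hyT
      rw [Matrix.add_apply, Matrix.smul_apply, hB_apply x y hyT.1, smul_eq_mul] at hy
      by_cases hxy : x = y
      · subst hxy
        simp [c] at hy
      · rw [if_neg hxy, mul_zero, add_zero] at hy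
        rcases hsupp y hy with h | h
        · exact hyT.1 h
        · exact hyT.2 ((Finset.mem_insert.1 h).resolve_left (Ne.symm hxy))
    simpa using add _ _ hrest ((hB x).1.smul c) hPrest (smul c _ (hB x).1 (hB x).2)

end Span

theorem eq_sub_of_add_cocycle {I G : Type*} [AddCommGroup G] [Infinite I] [DecidableEq I]
    {f : I → I → G} (hf : ∀ i j k, i ≠ j → i ≠ k → k ≠ j → f i j = f i k + f k j)
    (i₀ : I)
    {i j : I} (hij : i ≠ j) :
    f i j = (if i = i₀ then 0 else f i i₀) - (if j = i₀ then 0 else f j i₀) := by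
  have anti : ∀ i j, i ≠ j → f j i = -f i j := by
    intro i j hij
    obtain ⟨k, hk⟩ := Infinite.exists_notMem_finset ({i, j} : Finset I)
    simp only [Finset.mem_insert, Finset.mem_singleton, not_or] at hk
    have h₁ := hf i k j (Ne.symm hk.1) hij (Ne.symm hk.2)
    have h₂ := hf j k i (Ne.symm hk.2) hij.symm (Ne.symm hk.1)
    rw [h₂, ← add_assoc, right_eq_add] at h₁
    exact eq_neg_of_add_eq_zero_right h₁
  by_cases hi : i = i₀
  · subst hi
    rw [if_pos rfl, if_neg hij.symm, zero_sub, anti _ _ hij.symm]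
  by_cases hj : j = i₀
  · subst hj
    rw [if_neg hi, if_pos rfl, sub_zero]
  · rw [if_neg hi, if_neg hj, hf i j i₀ hij hi (Ne.symm hj), anti _ _ hj, sub_eq_add_neg]

/-- The off-diagonal entries do not depend on the choice of `r` (`innerMatrix_apply_of_ne`). -/
noncomputable def innerMatrix {F I : Type*} [Field F] [DecidableEq I] [Infinite I]
    (d : Matrix I I F → Matrix I I F) (i₀ : I) : Matrix I I F :=
  fun p q =>
    if p = q then (if p = i₀ then 0 else d (single p i₀ 1) p i₀)
    else
      let r := (Infinite.exists_notMem_finset ({p, q} : Finset I)).choose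
      d (single q r 1) p r

section Derivation

variable {F I : Type*} [Field F] [DecidableEq I] (d : Matrix I I F → Matrix I I F)
  (hbracket : ∀ a b, IsSl a → IsSl b →
    d (matMul a b - matMul b a) =
      (matMul (d a) b - matMul b (d a)) + (matMul a (d b) - matMul (d b) a))
include hbracket

theorem deriv_single_apply {i j k : I} (hij : i ≠ j) (hik : i ≠ k) (hkj : k ≠ j) (p q : I) :
    d (single i j 1) p q =
      ((if q = j then d (single i k 1) p k else 0) -
          (if p = k then d (single i k 1) j q else 0)) +
        ((if p = i then d (single k j 1) k q else 0) -
          (if q = k then d (single k j 1) p i else 0)) := by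
  have h := hbracket _ _ (isSl_single hik) (isSl_single hkj)
  rw [single_matMul_single_same, single_matMul_single_of_ne _ _ hij.symm, sub_zero] at h
  simpa only [Matrix.add_apply, Matrix.sub_apply, matMul_single_apply, single_matMul_apply]
    using congr_fun₂ h p q

theorem deriv_single_apply_col_eq {i j k p : I} (hij : i ≠ j) (hik : i ≠ k) (hkj : k ≠ j)
    (hpi : p ≠ i) (hpk : p ≠ k) : d (single i j 1) p j = d (single i k 1) p k := by
  rw [deriv_single_apply d hbracket hij hik hkj, if_pos rfl, if_neg hpk, if_neg hpi,
    if_neg hkj.symm]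
  simp

theorem deriv_single_apply_row_eq {i j k q : I} (hij : i ≠ j) (hik : i ≠ k) (hkj : k ≠ j)
    (hqj : q ≠ j) (hqk : q ≠ k) : d (single i j 1) i q = d (single k j 1) k q := by
  rw [deriv_single_apply d hbracket hij hik hkj, if_neg hqj, if_neg hik, if_pos rfl, if_neg hqk]
  simp

theorem deriv_single_apply_diag {i j k : I} (hij : i ≠ j) (hik : i ≠ k) (hkj : k ≠ j) :
    d (single i j 1) i j = d (single i k 1) i k + d (single k j 1) k j := by
  rw [deriv_single_apply d hbracket hij hik hkj, if_pos rfl, if_neg hik, if_pos rfl,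
    if_neg hkj.symm]
  simp

theorem deriv_single_apply_of_commute (hd0 : d 0 = 0) {k j q r : I} (hkj : k ≠ j) (hqr : q ≠ r)
    (hjq : j ≠ q) (hrk : r ≠ k) (hkq : k ≠ q) (hrj : r ≠ j) :
    d (single k j 1) k q = -d (single q r 1) j r := by
  have h := hbracket _ _ (isSl_single hkj) (isSl_single hqr)
  rw [single_matMul_single_of_ne _ _ hjq, single_matMul_single_of_ne _ _ hrk, sub_self, hd0] at h
  have h' := congr_fun₂ h k r
  simp only [Matrix.add_apply, Matrix.sub_apply, matMul_single_apply, single_matMul_apply,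
    Matrix.zero_apply, if_true, if_neg hkq, if_neg hrj] at h'
  linear_combination -h'

variable [Infinite I]

theorem deriv_single_apply_eq_zero {i j p q : I} (hij : i ≠ j) (hpi : p ≠ i)
    (hqj : q ≠ j) : d (single i j 1) p q = 0 := by
  obtain ⟨k, hk⟩ := Infinite.exists_notMem_finset ({i, j, p, q} : Finset I)
  simp only [Finset.mem_insert, Finset.mem_singleton, not_or] at hk
  obtain ⟨hki, hkj, hkp, hkq⟩ := hk
  rw [deriv_single_apply d hbracket hij (Ne.symm hki) hkj, if_neg hqj, if_neg (Ne.symm hkp),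
    if_neg hpi, if_neg (Ne.symm hkq)]
  simp

theorem innerMatrix_apply_of_ne (i₀ : I) {p q j : I} (hpq : p ≠ q) (hqj : q ≠ j) :
    innerMatrix d i₀ p q = d (single q j 1) p j := by
  have hr := (Infinite.exists_notMem_finset ({p, q} : Finset I)).choose_spec
  set r := (Infinite.exists_notMem_finset ({p, q} : Finset I)).choose
  simp only [Finset.mem_insert, Finset.mem_singleton, not_or] at hr
  obtain ⟨k, hk⟩ := Infinite.exists_notMem_finset ({p, q, j, r} : Finset I)
  simp only [Finset.mem_insert, Finset.mem_singleton, not_or] at hk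
  obtain ⟨hkp, hkq, hkj, hkr⟩ := hk
  rw [innerMatrix, if_neg hpq,
    deriv_single_apply_col_eq d hbracket (Ne.symm hr.2) (Ne.symm hkq) hkr hpq (Ne.symm hkp),
    deriv_single_apply_col_eq d hbracket hqj (Ne.symm hkq) hkj hpq (Ne.symm hkp)]

theorem deriv_single_eq_commutator (hd0 : d 0 = 0) (i₀ : I) {i j : I} (hij : i ≠ j) :
    d (single i j 1) =
      matMul (innerMatrix d i₀) (single i j 1) - matMul (single i j 1) (innerMatrix d i₀) := by
  ext p q
  rw [Matrix.sub_apply, matMul_single_apply, single_matMul_apply]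
  by_cases hp : p = i <;> by_cases hq : q = j
  · subst hp hq
    rw [if_pos rfl, if_pos rfl, innerMatrix, innerMatrix, if_pos rfl, if_pos rfl]
    exact eq_sub_of_add_cocycle (f := fun i j => d (single i j 1) i j)
      (fun _ _ _ => deriv_single_apply_diag d hbracket) i₀ hij
  · subst hp
    rw [if_neg hq, if_pos rfl, zero_sub]
    obtain ⟨k, hk⟩ := Infinite.exists_notMem_finset ({p, j, q} : Finset I)
    simp only [Finset.mem_insert, Finset.mem_singleton, not_or] at hk
    obtain ⟨r, hr⟩ := Infinite.exists_notMem_finset ({j, q, k} : Finset I)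
    simp only [Finset.mem_insert, Finset.mem_singleton, not_or] at hr
    rw [deriv_single_apply_row_eq d hbracket hij (Ne.symm hk.1) hk.2.1 hq (Ne.symm hk.2.2),
      deriv_single_apply_of_commute d hbracket hd0 hk.2.1 (Ne.symm hr.2.1) (Ne.symm hq) hr.2.2
        hk.2.2 hr.1,
      innerMatrix_apply_of_ne d hbracket i₀ (Ne.symm hq) (Ne.symm hr.2.1)]
  · subst hq
    rw [if_pos rfl, if_neg hp, sub_zero, innerMatrix_apply_of_ne d hbracket i₀ hp hij]
  · rw [if_neg hq, if_neg hp, sub_zero, deriv_single_apply_eq_zero d hbracket hij hp hq]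

end Derivation

theorem isRcf_of_isRcf_commutator_single {F I : Type*} [Field F] [DecidableEq I] [Nontrivial I]
    {y : Matrix I I F}
    (h : ∀ i j, i ≠ j → IsRcf (matMul y (single i j 1) - matMul (single i j 1) y)) :
    IsRcf y := by
  constructor
  · intro p
    obtain ⟨k, hk⟩ := exists_ne p
    refine (((h k p hk).1 k).insert p).subset fun q hq => ?_
    by_cases hqp : q = p
    · exact Or.inl hqp
    · right
      simpa [matMul_single_apply, single_matMul_apply, hqp] using hq
  · intro q
    obtain ⟨k, hk⟩ := exists_ne q
    refine (((h q k hk.symm).2 k).insert q).subset fun p hp => ?_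
    by_cases hpq : p = q
    · exact Or.inl hpq
    · right
      simpa [matMul_single_apply, single_matMul_apply, hpq] using hp

theorem stmt_9_general (F I : Type*) [Field F] [Infinite I]
    (d : Matrix I I F → Matrix I I F)
    (hmap : ∀ a, IsSl a → IsSl (d a))
    (hadd : ∀ a b, IsSl a → IsSl b → d (a + b) = d a + d b)
    (hsmul : ∀ (c : F) (a), IsSl a → d (c • a) = c • d a)
    (hbracket : ∀ a b, IsSl a → IsSl b →
      d (matMul a b - matMul b a) =
        (matMul (d a) b - matMul b (d a)) + (matMul a (d b) - matMul (d b) a)) :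
    ∃ y : Matrix I I F, IsRcf y ∧
      ∀ a, IsSl a → d a = matMul y a - matMul a y := by
  classical
  obtain ⟨i₀⟩ : Nonempty I := inferInstance
  have hd0 : d 0 = 0 := by simpa using hsmul 0 0 isSl_zero
  set y := innerMatrix d i₀
  have hsingle : ∀ i j, i ≠ j →
      d (single i j 1) = matMul y (single i j 1) - matMul (single i j 1) y :=
    fun i j => deriv_single_eq_commutator d hbracket hd0 i₀
  have hy : IsRcf y := isRcf_of_isRcf_commutator_single fun i j hij =>
    hsingle i j hij ▸ (hmap _ (isSl_single hij)).1.isRcf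
  refine ⟨y, hy, fun a ha =>
    ha.induction_on (P := fun a => d a = matMul y a - matMul a y) ?_ ?_ ?_ hsingle ?_⟩
  · rw [hd0, matMul_zero, zero_matMul, sub_zero]
  · intro a b ha hb hda hdb
    rw [hadd a b ha hb, hda, hdb, matMul_add hy, add_matMul hy]
    abel
  · intro c a ha hda
    rw [hsmul c a ha, hda, matMul_smul, smul_matMul, smul_sub]
  · intro i j hij
    rw [← single_matMul_single_same i j i, ← single_matMul_single_same j i j,
      hbracket _ _ (isSl_single hij) (isSl_single hij.symm), hsingle i j hij,
      hsingle j i hij.symm]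
    exact (matMul_commutator_sub hy (isFinitary_single i j).isRcf
      (isFinitary_single j i).isRcf).symm

/-- For `char F ≠ 2` and `I` infinite, every derivation `d` of the Lie
algebra `sl_∞(I,F)` is of the form `d(a) = y*a - a*y` for some `y ∈ M_rcf(I,F)`. -/
theorem stmt_9 (F I : Type*) [Field F] [Infinite I] (hchar : ringChar F ≠ 2)
    (d : Matrix I I F → Matrix I I F)
    (hmap : ∀ a, IsSl a → IsSl (d a))
    (hadd : ∀ a b, IsSl a → IsSl b → d (a + b) = d a + d b)
    (hsmul : ∀ (c : F) (a), IsSl a → d (c • a) = c • d a)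
    (hbracket : ∀ a b, IsSl a → IsSl b →
      d (matMul a b - matMul b a) =
        (matMul (d a) b - matMul b (d a)) + (matMul a (d b) - matMul (d b) a)) :
    ∃ y : Matrix I I F, IsRcf y ∧
      ∀ a, IsSl a → d a = matMul y a - matMul a y :=
  stmt_9_general F I d hmap hadd hsmul hbracket
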